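/- arXiv:math/0003153 — 2 statements merged into one kernel-verified Lean document; each statement's English description precedes it below -/
import Mathlib

section
/- Let a, b, c, d, α, β, γ, δ and m be natural numbers with m ≥ 1, satisfying: a + α = m, b + β = m, c + γ = 2m, d + δ = 3m, 2d = 3c, 2δ = 3γ, at least one of a, b, c, d equals 0, and at least one of α, β, γ, δ equals 0. Then, after possibly replacing the pair of quadruples ((a,b,c,d), (α,β,γ,δ)) by ((α,β,γ,δ), (a,b,c,d)) (swapping the two quadruples) and/or by ((b,a,c,d), (β,α,γ,δ)) (simultaneously swapping the first two entries of both quadruples), exactly one of the following holds: (A) there exist a', α' ≥ 1 with a' + α' = m such that (a,b,c,d) = (a', m, 0, 0) and (α,β,γ,δ) = (α', 0, 2m, 3m); (B) (a,b,c,d) = (0, m, 0, 0) and (α,β,γ,δ) = (m, 0, 2m, 3m); (C) (a,b,c,d) = (m, m, 0, 0) and (α,β,γ,δ) = (0, 0, 2m, 3m); (D) there exist k, l ≥ 1 with k + l = m (hence m ≥ 2) such that (a,b,c,d) = (0, m, 2k, 3k) and (α,β,γ,δ) = (m, 0, 2l, 3l). -/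
/-- A quadruple of natural numbers. -/
abbrev Quad := ℕ × ℕ × ℕ × ℕ

/-- Swap the first two entries of a quadruple. -/
def swap12 (q : Quad) : Quad := (q.2.1, q.1, q.2.2.1, q.2.2.2)

/-- Case A of the paper: `(a,b,c,d) = (a', m, 0, 0)`, `(α,β,γ,δ) = (α', 0, 2m, 3m)`
with `a', α' ≥ 1`, `a' + α' = m`. -/
def caseA (m : ℕ) (q₁ q₂ : Quad) : Prop :=
  ∃ a' α' : ℕ, 1 ≤ a' ∧ 1 ≤ α' ∧ a' + α' = m ∧
    q₁ = (a', m, 0, 0) ∧ q₂ = (α', 0, 2 * m, 3 * m)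

/-- Case B of the paper. -/
def caseB (m : ℕ) (q₁ q₂ : Quad) : Prop :=
  q₁ = (0, m, 0, 0) ∧ q₂ = (m, 0, 2 * m, 3 * m)

/-- Case C of the paper. -/
def caseC (m : ℕ) (q₁ q₂ : Quad) : Prop :=
  q₁ = (m, m, 0, 0) ∧ q₂ = (0, 0, 2 * m, 3 * m)

/-- Case D of the paper: `(a,b,c,d) = (0, m, 2k, 3k)`, `(α,β,γ,δ) = (m, 0, 2l, 3l)`
with `k, l ≥ 1`, `k + l = m`. -/
def caseD (m : ℕ) (q₁ q₂ : Quad) : Prop :=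
  ∃ k l : ℕ, 1 ≤ k ∧ 1 ≤ l ∧ k + l = m ∧
    q₁ = (0, m, 2 * k, 3 * k) ∧ q₂ = (m, 0, 2 * l, 3 * l)

/-- Exactly one of four propositions holds. -/
def ExactlyOne4 (p₁ p₂ p₃ p₄ : Prop) : Prop :=
  (p₁ ∧ ¬p₂ ∧ ¬p₃ ∧ ¬p₄) ∨ (¬p₁ ∧ p₂ ∧ ¬p₃ ∧ ¬p₄) ∨
    (¬p₁ ∧ ¬p₂ ∧ p₃ ∧ ¬p₄) ∨ (¬p₁ ∧ ¬p₂ ∧ ¬p₃ ∧ p₄)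

lemma exA (m a' α' : ℕ) (h1 : 1 ≤ a') (h2 : 1 ≤ α') (h3 : a' + α' = m) :
    ExactlyOne4 (caseA m (a', m, 0, 0) (α', 0, 2*m, 3*m))
      (caseB m (a', m, 0, 0) (α', 0, 2*m, 3*m))
      (caseC m (a', m, 0, 0) (α', 0, 2*m, 3*m))
      (caseD m (a', m, 0, 0) (α', 0, 2*m, 3*m)) := by
  refine Or.inl ⟨⟨a', α', h1, h2, h3, rfl, rfl⟩, ?_, ?_, ?_⟩
  · rintro ⟨e1, e2⟩; simp [Prod.ext_iff] at e1 e2; omega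
  · rintro ⟨e1, e2⟩; simp [Prod.ext_iff] at e1 e2; omega
  · rintro ⟨k, l, g1, g2, g3, e1, e2⟩; simp [Prod.ext_iff] at e1 e2; omega

lemma exB (m : ℕ) (hm : 1 ≤ m) :
    ExactlyOne4 (caseA m (0, m, 0, 0) (m, 0, 2*m, 3*m))
      (caseB m (0, m, 0, 0) (m, 0, 2*m, 3*m))
      (caseC m (0, m, 0, 0) (m, 0, 2*m, 3*m))
      (caseD m (0, m, 0, 0) (m, 0, 2*m, 3*m)) := by
  refine Or.inr (Or.inl ⟨?_, ⟨rfl, rfl⟩, ?_, ?_⟩)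
  · rintro ⟨a', α', g1, g2, g3, e1, e2⟩; simp [Prod.ext_iff] at e1 e2; omega
  · rintro ⟨e1, e2⟩; simp [Prod.ext_iff] at e1 e2; omega
  · rintro ⟨k, l, g1, g2, g3, e1, e2⟩; simp [Prod.ext_iff] at e1 e2; omega

lemma exC (m : ℕ) (hm : 1 ≤ m) :
    ExactlyOne4 (caseA m (m, m, 0, 0) (0, 0, 2*m, 3*m))
      (caseB m (m, m, 0, 0) (0, 0, 2*m, 3*m))
      (caseC m (m, m, 0, 0) (0, 0, 2*m, 3*m))
      (caseD m (m, m, 0, 0) (0, 0, 2*m, 3*m)) := by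
  refine Or.inr (Or.inr (Or.inl ⟨?_, ?_, ⟨rfl, rfl⟩, ?_⟩))
  · rintro ⟨a', α', g1, g2, g3, e1, e2⟩; simp [Prod.ext_iff] at e1 e2; omega
  · rintro ⟨e1, e2⟩; simp [Prod.ext_iff] at e1 e2; omega
  · rintro ⟨k, l, g1, g2, g3, e1, e2⟩; simp [Prod.ext_iff] at e1 e2; omega

lemma exD (m k l : ℕ) (h1 : 1 ≤ k) (h2 : 1 ≤ l) (h3 : k + l = m) :
    ExactlyOne4 (caseA m (0, m, 2*k, 3*k) (m, 0, 2*l, 3*l))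
      (caseB m (0, m, 2*k, 3*k) (m, 0, 2*l, 3*l))
      (caseC m (0, m, 2*k, 3*k) (m, 0, 2*l, 3*l))
      (caseD m (0, m, 2*k, 3*k) (m, 0, 2*l, 3*l)) := by
  refine Or.inr (Or.inr (Or.inr ⟨?_, ?_, ?_, ⟨k, l, h1, h2, h3, rfl, rfl⟩⟩))
  · rintro ⟨a', α', g1, g2, g3, e1, e2⟩; simp [Prod.ext_iff] at e1 e2; omega
  · rintro ⟨e1, e2⟩; simp [Prod.ext_iff] at e1 e2; omega
  · rintro ⟨e1, e2⟩; simp [Prod.ext_iff] at e1 e2; omega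

lemma exA' (m a' α' : ℕ) (h1 : 1 ≤ a') (h2 : 1 ≤ α') (h3 : a' + α' = m)
    (q₁ q₂ : Quad) (e1 : q₁ = (a', m, 0, 0)) (e2 : q₂ = (α', 0, 2*m, 3*m)) :
    ExactlyOne4 (caseA m q₁ q₂) (caseB m q₁ q₂) (caseC m q₁ q₂) (caseD m q₁ q₂) := by
  subst e1 e2; exact exA m a' α' h1 h2 h3

lemma exB' (m : ℕ) (hm : 1 ≤ m)
    (q₁ q₂ : Quad) (e1 : q₁ = (0, m, 0, 0)) (e2 : q₂ = (m, 0, 2*m, 3*m)) :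
    ExactlyOne4 (caseA m q₁ q₂) (caseB m q₁ q₂) (caseC m q₁ q₂) (caseD m q₁ q₂) := by
  subst e1 e2; exact exB m hm

lemma exC' (m : ℕ) (hm : 1 ≤ m)
    (q₁ q₂ : Quad) (e1 : q₁ = (m, m, 0, 0)) (e2 : q₂ = (0, 0, 2*m, 3*m)) :
    ExactlyOne4 (caseA m q₁ q₂) (caseB m q₁ q₂) (caseC m q₁ q₂) (caseD m q₁ q₂) := by
  subst e1 e2; exact exC m hm

lemma exD' (m k l : ℕ) (h1 : 1 ≤ k) (h2 : 1 ≤ l) (h3 : k + l = m)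
    (q₁ q₂ : Quad) (e1 : q₁ = (0, m, 2*k, 3*k)) (e2 : q₂ = (m, 0, 2*l, 3*l)) :
    ExactlyOne4 (caseA m q₁ q₂) (caseB m q₁ q₂) (caseC m q₁ q₂) (caseD m q₁ q₂) := by
  subst e1 e2; exact exD m k l h1 h2 h3

/-- the main case division of the paper.  Any solution of the
system (6), with each quadruple of exponents containing a zero, falls — after
possibly swapping the two quadruples (exchanging `φ` and `φ⁻¹`) and/or
simultaneously swapping the first two entries of both (exchanging `x` and `y`)
— into exactly one of the cases A, B, C, D. -/
theorem stmt2 (a b c d α β γ δ m : ℕ) (hm : 1 ≤ m)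
    (h₁ : a + α = m) (h₂ : b + β = m) (h₃ : c + γ = 2 * m) (h₄ : d + δ = 3 * m)
    (h₅ : 2 * d = 3 * c) (h₆ : 2 * δ = 3 * γ)
    (h₇ : a = 0 ∨ b = 0 ∨ c = 0 ∨ d = 0)
    (h₈ : α = 0 ∨ β = 0 ∨ γ = 0 ∨ δ = 0) :
    ∃ swapMaps swapXY : Bool,
      let q₁₀ : Quad := if swapMaps then (α, β, γ, δ) else (a, b, c, d)
      let q₂₀ : Quad := if swapMaps then (a, b, c, d) else (α, β, γ, δ)
      let q₁ : Quad := if swapXY then swap12 q₁₀ else q₁₀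
      let q₂ : Quad := if swapXY then swap12 q₂₀ else q₂₀
      ExactlyOne4 (caseA m q₁ q₂) (caseB m q₁ q₂) (caseC m q₁ q₂) (caseD m q₁ q₂) := by
  obtain ⟨k, hc, hd⟩ : ∃ k, c = 2*k ∧ d = 3*k := ⟨d - c, by omega, by omega⟩
  obtain ⟨l, hg, hdl⟩ : ∃ l, γ = 2*l ∧ δ = 3*l := ⟨δ - γ, by omega, by omega⟩
  subst hc hd hg hdl
  have hkl : k + l = m := by omega
  rcases Nat.eq_zero_or_pos k with hk | hk
  · have hαβ : α = 0 ∨ β = 0 := by omega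
    rcases hαβ with hα | hβ
    · rcases Nat.eq_zero_or_pos β with hβ | hβ
      · refine ⟨false, false, ?_⟩
        refine exC' m hm (a, b, 2*k, 3*k) (α, β, 2*l, 3*l) ?_ ?_
        · refine Prod.ext ?_ (Prod.ext ?_ (Prod.ext ?_ ?_)) <;> simp <;> omega
        · refine Prod.ext ?_ (Prod.ext ?_ (Prod.ext ?_ ?_)) <;> simp <;> omega
      · rcases Nat.eq_zero_or_pos b with hb | hb
        · refine ⟨false, true, ?_⟩
          refine exB' m hm (b, a, 2*k, 3*k) (β, α, 2*l, 3*l) ?_ ?_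
          · refine Prod.ext ?_ (Prod.ext ?_ (Prod.ext ?_ ?_)) <;> simp <;> omega
          · refine Prod.ext ?_ (Prod.ext ?_ (Prod.ext ?_ ?_)) <;> simp <;> omega
        · refine ⟨false, true, ?_⟩
          refine exA' m b β hb hβ (by omega) (b, a, 2*k, 3*k) (β, α, 2*l, 3*l) ?_ ?_
          · refine Prod.ext ?_ (Prod.ext ?_ (Prod.ext ?_ ?_)) <;> simp <;> omega
          · refine Prod.ext ?_ (Prod.ext ?_ (Prod.ext ?_ ?_)) <;> simp <;> omega
    · rcases Nat.eq_zero_or_pos a with ha | ha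
      · refine ⟨false, false, ?_⟩
        refine exB' m hm (a, b, 2*k, 3*k) (α, β, 2*l, 3*l) ?_ ?_
        · refine Prod.ext ?_ (Prod.ext ?_ (Prod.ext ?_ ?_)) <;> simp <;> omega
        · refine Prod.ext ?_ (Prod.ext ?_ (Prod.ext ?_ ?_)) <;> simp <;> omega
      · rcases Nat.eq_zero_or_pos α with hα | hα
        · refine ⟨false, false, ?_⟩
          refine exC' m hm (a, b, 2*k, 3*k) (α, β, 2*l, 3*l) ?_ ?_
          · refine Prod.ext ?_ (Prod.ext ?_ (Prod.ext ?_ ?_)) <;> simp <;> omega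
          · refine Prod.ext ?_ (Prod.ext ?_ (Prod.ext ?_ ?_)) <;> simp <;> omega
        · refine ⟨false, false, ?_⟩
          refine exA' m a α ha hα (by omega) (a, b, 2*k, 3*k) (α, β, 2*l, 3*l) ?_ ?_
          · refine Prod.ext ?_ (Prod.ext ?_ (Prod.ext ?_ ?_)) <;> simp <;> omega
          · refine Prod.ext ?_ (Prod.ext ?_ (Prod.ext ?_ ?_)) <;> simp <;> omega
  · rcases Nat.eq_zero_or_pos l with hl | hl
    · have hab : a = 0 ∨ b = 0 := by omega
      rcases hab with ha | hb
      · rcases Nat.eq_zero_or_pos b with hb | hb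
        · refine ⟨true, false, ?_⟩
          refine exC' m hm (α, β, 2*l, 3*l) (a, b, 2*k, 3*k) ?_ ?_
          · refine Prod.ext ?_ (Prod.ext ?_ (Prod.ext ?_ ?_)) <;> simp <;> omega
          · refine Prod.ext ?_ (Prod.ext ?_ (Prod.ext ?_ ?_)) <;> simp <;> omega
        · rcases Nat.eq_zero_or_pos β with hβ | hβ
          · refine ⟨true, true, ?_⟩
            refine exB' m hm (β, α, 2*l, 3*l) (b, a, 2*k, 3*k) ?_ ?_
            · refine Prod.ext ?_ (Prod.ext ?_ (Prod.ext ?_ ?_)) <;> simp <;> omega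
            · refine Prod.ext ?_ (Prod.ext ?_ (Prod.ext ?_ ?_)) <;> simp <;> omega
          · refine ⟨true, true, ?_⟩
            refine exA' m β b hβ hb (by omega) (β, α, 2*l, 3*l) (b, a, 2*k, 3*k) ?_ ?_
            · refine Prod.ext ?_ (Prod.ext ?_ (Prod.ext ?_ ?_)) <;> simp <;> omega
            · refine Prod.ext ?_ (Prod.ext ?_ (Prod.ext ?_ ?_)) <;> simp <;> omega
      · rcases Nat.eq_zero_or_pos α with hα | hα
        · refine ⟨true, false, ?_⟩
          refine exB' m hm (α, β, 2*l, 3*l) (a, b, 2*k, 3*k) ?_ ?_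
          · refine Prod.ext ?_ (Prod.ext ?_ (Prod.ext ?_ ?_)) <;> simp <;> omega
          · refine Prod.ext ?_ (Prod.ext ?_ (Prod.ext ?_ ?_)) <;> simp <;> omega
        · rcases Nat.eq_zero_or_pos a with ha | ha
          · refine ⟨true, false, ?_⟩
            refine exC' m hm (α, β, 2*l, 3*l) (a, b, 2*k, 3*k) ?_ ?_
            · refine Prod.ext ?_ (Prod.ext ?_ (Prod.ext ?_ ?_)) <;> simp <;> omega
            · refine Prod.ext ?_ (Prod.ext ?_ (Prod.ext ?_ ?_)) <;> simp <;> omega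
          · refine ⟨true, false, ?_⟩
            refine exA' m α a hα ha (by omega) (α, β, 2*l, 3*l) (a, b, 2*k, 3*k) ?_ ?_
            · refine Prod.ext ?_ (Prod.ext ?_ (Prod.ext ?_ ?_)) <;> simp <;> omega
            · refine Prod.ext ?_ (Prod.ext ?_ (Prod.ext ?_ ?_)) <;> simp <;> omega
    · have hab : a = 0 ∨ b = 0 := by omega
      rcases hab with ha | hb
      · refine ⟨false, false, ?_⟩
        refine exD' m k l hk hl hkl (a, b, 2*k, 3*k) (α, β, 2*l, 3*l) ?_ ?_
        · refine Prod.ext ?_ (Prod.ext ?_ (Prod.ext ?_ ?_)) <;> simp <;> omega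
        · refine Prod.ext ?_ (Prod.ext ?_ (Prod.ext ?_ ?_)) <;> simp <;> omega
      · refine ⟨false, true, ?_⟩
        refine exD' m k l hk hl hkl (b, a, 2*k, 3*k) (β, α, 2*l, 3*l) ?_ ?_
        · refine Prod.ext ?_ (Prod.ext ?_ (Prod.ext ?_ ?_)) <;> simp <;> omega
        · refine Prod.ext ?_ (Prod.ext ?_ (Prod.ext ?_ ?_)) <;> simp <;> omega
end

section
/- Let 𝒪 be a commutative ring, t ∈ 𝒪, and let k, l, m be natural numbers with k ≥ 1, l ≥ 1, k ≤ l and m = k + l. Let α₀, α₁, β₀, β₁, β₂, a₂, a₃, a₄, b₃, b₄, b₅, b₆ ∈ 𝒪. Then the polynomial F = w² + z³ + z·(α₀x⁴ + α₁x³ + a₂·t^{2m−4k}·x² + a₃·t^{3m−4k}·x + a₄·t^{4m−4k}) + β₀x⁶ + β₁x⁵ + β₂x⁴ + b₃·t^{3m−6k}·x³ + b₄·t^{4m−6k}·x² + b₅·t^{5m−6k}·x + b₆·t^{6m−6k} in 𝒪[x,z,w] lies in I², where I is the ideal of 𝒪[x,z,w] generated by t, x, z and w. -/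
open MvPolynomial

/-- case D: `X` is always singular: in `𝒪[x,z,w]` with
`x = X 0, z = X 1, w = X 2`, the dehomogenized defining polynomial of `X`
lies in `I²`, where `I = (t, x, z, w)`. -/
theorem stmt6 (𝒪 : Type*) [CommRing 𝒪] (t : 𝒪) (k l m : ℕ)
    (hk : 1 ≤ k) (hl : 1 ≤ l) (hkl : k ≤ l) (hm : m = k + l)
    (α₀ α₁ β₀ β₁ β₂ a₂ a₃ a₄ b₃ b₄ b₅ b₆ : 𝒪) :
    (X 2 ^ 2 + X 1 ^ 3
        + X 1 * (C α₀ * X 0 ^ 4 + C α₁ * X 0 ^ 3 + C (a₂ * t ^ (2 * m - 4 * k)) * X 0 ^ 2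
            + C (a₃ * t ^ (3 * m - 4 * k)) * X 0 + C (a₄ * t ^ (4 * m - 4 * k)))
        + C β₀ * X 0 ^ 6 + C β₁ * X 0 ^ 5 + C β₂ * X 0 ^ 4
        + C (b₃ * t ^ (3 * m - 6 * k)) * X 0 ^ 3 + C (b₄ * t ^ (4 * m - 6 * k)) * X 0 ^ 2
        + C (b₅ * t ^ (5 * m - 6 * k)) * X 0 + C (b₆ * t ^ (6 * m - 6 * k)))
      ∈ (Ideal.span {C t, X 0, X 1, X 2} : Ideal (MvPolynomial (Fin 3) 𝒪)) ^ 2 := by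
  set I : Ideal (MvPolynomial (Fin 3) 𝒪) := Ideal.span {C t, X 0, X 1, X 2} with hI
  have ht : (C t : MvPolynomial (Fin 3) 𝒪) ∈ I := Ideal.subset_span (by simp)
  have hx : (X 0 : MvPolynomial (Fin 3) 𝒪) ∈ I := Ideal.subset_span (by simp)
  have hz : (X 1 : MvPolynomial (Fin 3) 𝒪) ∈ I := Ideal.subset_span (by simp)
  have hw : (X 2 : MvPolynomial (Fin 3) 𝒪) ∈ I := Ideal.subset_span (by simp)
  have h2 : ∀ p q : MvPolynomial (Fin 3) 𝒪, p ∈ I → q ∈ I → p * q ∈ I ^ 2 := by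
    intro p q hp hq
    rw [sq]
    exact Ideal.mul_mem_mul hp hq
  -- t-power membership helpers
  have htpow : ∀ n : ℕ, 1 ≤ n → ((C t : MvPolynomial (Fin 3) 𝒪) ^ n) ∈ I := by
    intro n hn
    obtain ⟨j, rfl⟩ : ∃ j, n = j + 1 := ⟨n - 1, by omega⟩
    rw [pow_succ]
    exact Ideal.mul_mem_left _ _ ht
  have htC : ∀ (a : 𝒪) (n : ℕ), 1 ≤ n → (C (a * t ^ n) : MvPolynomial (Fin 3) 𝒪) ∈ I := by
    intro a n hn
    rw [map_mul, map_pow]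
    exact Ideal.mul_mem_left _ _ (htpow n hn)
  have htC2 : ∀ (a : 𝒪) (n : ℕ), 2 ≤ n → (C (a * t ^ n) : MvPolynomial (Fin 3) 𝒪) ∈ I ^ 2 := by
    intro a n hn
    obtain ⟨j, rfl⟩ : ∃ j, n = j + 2 := ⟨n - 2, by omega⟩
    have : (C (a * t ^ (j + 2)) : MvPolynomial (Fin 3) 𝒪)
        = (C a * C t ^ j) * (C t * C t) := by
      rw [map_mul, map_pow]; ring
    rw [this]
    exact Ideal.mul_mem_left _ _ (h2 _ _ ht ht)
  -- arithmetic facts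
  have e4 : 1 ≤ 4 * m - 4 * k := by omega
  have e5 : 1 ≤ 5 * m - 6 * k := by omega
  have e6 : 2 ≤ 6 * m - 6 * k := by omega
  -- inner sum is in I
  have hinner : (C α₀ * X 0 ^ 4 + C α₁ * X 0 ^ 3 + C (a₂ * t ^ (2 * m - 4 * k)) * X 0 ^ 2
      + C (a₃ * t ^ (3 * m - 4 * k)) * X 0 + C (a₄ * t ^ (4 * m - 4 * k))
      : MvPolynomial (Fin 3) 𝒪) ∈ I := by
    refine Ideal.add_mem _ (Ideal.add_mem _ (Ideal.add_mem _ (Ideal.add_mem _ ?_ ?_) ?_) ?_)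
      (htC _ _ e4)
    · exact Ideal.mul_mem_left _ _ (by rw [pow_succ]; exact Ideal.mul_mem_left _ _ hx)
    · exact Ideal.mul_mem_left _ _ (by rw [pow_succ]; exact Ideal.mul_mem_left _ _ hx)
    · exact Ideal.mul_mem_left _ _ (by rw [pow_succ]; exact Ideal.mul_mem_left _ _ hx)
    · exact Ideal.mul_mem_left _ _ hx
  have hx2 : (X 0 * X 0 : MvPolynomial (Fin 3) 𝒪) ∈ I ^ 2 := h2 _ _ hx hx
  have hxpow : ∀ n : ℕ, 2 ≤ n → ((X 0 : MvPolynomial (Fin 3) 𝒪) ^ n) ∈ I ^ 2 := by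
    intro n hn
    obtain ⟨j, rfl⟩ : ∃ j, n = j + 2 := ⟨n - 2, by omega⟩
    have : (X 0 : MvPolynomial (Fin 3) 𝒪) ^ (j + 2) = X 0 ^ j * (X 0 * X 0) := by ring
    rw [this]
    exact Ideal.mul_mem_left _ _ hx2
  refine Ideal.add_mem _ (Ideal.add_mem _ (Ideal.add_mem _ (Ideal.add_mem _ (Ideal.add_mem _
    (Ideal.add_mem _ (Ideal.add_mem _ (Ideal.add_mem _ (Ideal.add_mem _
    ?_ ?_) ?_) ?_) ?_) ?_) ?_) ?_) ?_) ?_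
  · -- X 2 ^ 2
    have : (X 2 : MvPolynomial (Fin 3) 𝒪) ^ 2 = X 2 * X 2 := sq (X 2)
    rw [this]; exact h2 _ _ hw hw
  · -- X 1 ^ 3
    have : (X 1 : MvPolynomial (Fin 3) 𝒪) ^ 3 = X 1 * (X 1 * X 1) := by ring
    rw [this]
    exact Ideal.mul_mem_left _ _ (h2 _ _ hz hz)
  · exact h2 _ _ hz hinner
  · exact Ideal.mul_mem_left _ _ (hxpow 6 (by norm_num))
  · exact Ideal.mul_mem_left _ _ (hxpow 5 (by norm_num))
  · exact Ideal.mul_mem_left _ _ (hxpow 4 (by norm_num))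
  · exact Ideal.mul_mem_left _ _ (hxpow 3 (by norm_num))
  · exact Ideal.mul_mem_left _ _ (hxpow 2 (by norm_num))
  · exact h2 _ _ (htC _ _ e5) hx
  · exact htC2 _ _ e6
end
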